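/- Let p : [0,∞) → ℝ be Lipschitz continuous, non-increasing, with either p(0) > 2, or p(0) = 2 with p differentiable at 0 and p'(0) < 0. Define A : ℝ → ℝ by A(s) = |s|^{p(|s|)-2} s for s ≠ 0 and A(0) = 0. Then A is locally Lipschitz continuous on ℝ, i.e., Lipschitz on every bounded interval. -/
import Mathlib

set_option maxHeartbeats 1000000


/-- The range kernel `A(s) = |s|^{p(|s|)-2} s` of the nonlocal
`p(∇u)`-Laplacian is locally Lipschitz continuous. -/
theorem stmt_11 (p : ℝ → ℝ) (K : NNReal)
    (hpLip : LipschitzOnWith K p (Set.Ici 0))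
    (hpmono : AntitoneOn p (Set.Ici 0))
    (hp0 : 2 < p 0 ∨ (p 0 = 2 ∧ ∃ p' : ℝ, HasDerivWithinAt p p' (Set.Ici 0) 0 ∧ p' < 0))
    (A : ℝ → ℝ)
    (hA : ∀ s : ℝ, s ≠ 0 → A s = |s| ^ (p |s| - 2) * s) (hA0 : A 0 = 0) :
    ∀ R : ℝ, 0 < R → ∃ L : NNReal, LipschitzOnWith L A (Set.Icc (-R) R) := by
  intro R hR
  have hKnn : (0:ℝ) ≤ (K:ℝ) := K.coe_nonneg
  have h2 : (2:ℝ) ≤ p 0 := by rcases hp0 with h | ⟨h, _⟩ <;> linarith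
  have hK : ∀ σ : ℝ, 0 ≤ σ → |p σ - p 0| ≤ K * σ := by
    intro σ hσ
    have := (lipschitzOnWith_iff_dist_le_mul.mp hpLip) σ (Set.mem_Ici.mpr hσ) 0
      (Set.mem_Ici.mpr le_rfl)
    simpa [Real.dist_eq, abs_of_nonneg hσ] using this
  -- constants
  obtain ⟨LR, hLRdef⟩ : ∃ x : ℝ, x = max 0 (Real.log R) := ⟨_, rfl⟩
  have hLR0 : 0 ≤ LR := by rw [hLRdef]; exact le_max_left _ _
  obtain ⟨B, hBdef⟩ : ∃ x : ℝ, x = K + (|p 0| + K*R + 2) * LR := ⟨_, rfl⟩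
  have habsKR : (0:ℝ) ≤ |p 0| + K*R + 2 := by
    have := abs_nonneg (p 0); have := mul_nonneg hKnn hR.le; linarith
  have hBnn : 0 ≤ B := by
    have := mul_nonneg habsKR hLR0
    linarith
  obtain ⟨C₁, hC₁def⟩ : ∃ x : ℝ, x = Real.exp B := ⟨_, rfl⟩
  have hC₁pos : 0 < C₁ := hC₁def ▸ Real.exp_pos B
  obtain ⟨M, hMdef⟩ : ∃ x : ℝ, x = |p 0| + K*R + 1 := ⟨_, rfl⟩
  have hM1 : (1:ℝ) ≤ M := by
    have := abs_nonneg (p 0); have := mul_nonneg hKnn hR.le; linarith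
  obtain ⟨C₂, hC₂def⟩ : ∃ x : ℝ, x = 1 + R * LR := ⟨_, rfl⟩
  have hC₂1 : (1:ℝ) ≤ C₂ := by
    have := mul_nonneg hR.le hLR0; linarith
  obtain ⟨Lg, hLgdef⟩ : ∃ x : ℝ, x = 2*C₁*(M + K*C₂ + 1) := ⟨_, rfl⟩
  have hLgC : 2*C₁ ≤ Lg := by
    rw [hLgdef]
    nlinarith [mul_nonneg hKnn (by linarith : (0:ℝ) ≤ C₂)]
  have hLg0 : 0 ≤ Lg := by linarith
  -- x * (-log x) ≤ 1 for 0 < x ≤ 1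
  have hxlog : ∀ x : ℝ, 0 < x → x ≤ 1 → x * (-Real.log x) ≤ 1 := by
    intro x hx hx1
    have h := Real.log_le_sub_one_of_pos (show (0:ℝ) < 1/x by positivity)
    rw [one_div, Real.log_inv] at h
    have hinv : x * x⁻¹ = 1 := mul_inv_cancel₀ hx.ne'
    nlinarith [mul_le_mul_of_nonneg_left h hx.le]
  -- key exponent bound
  have hBound : ∀ σ : ℝ, 0 < σ → σ ≤ R → (p σ - 2) * Real.log σ ≤ B := by
    intro σ hσ hσR
    have hKσ : |p σ - p 0| ≤ K * σ := hK σ hσ.le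
    rcases le_or_gt σ 1 with h1 | h1
    · have hlog : Real.log σ ≤ 0 := Real.log_nonpos hσ.le h1
      have h3 : (0:ℝ) ≤ (|p 0| + K*R + 2) * LR := mul_nonneg habsKR hLR0
      rcases le_or_gt 2 (p σ) with h2' | h2'
      · have : (p σ - 2) * Real.log σ ≤ 0 := mul_nonpos_of_nonneg_of_nonpos (by linarith) hlog
        linarith
      · have habs : 2 - p σ ≤ K * σ := by
          have := abs_le.mp hKσ
          linarith
        have hx := hxlog σ hσ h1
        have hstep1 : (2 - p σ) * (-Real.log σ) ≤ ((K:ℝ)*σ) * (-Real.log σ) :=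
          mul_le_mul_of_nonneg_right habs (by linarith)
        have hstep2 : (K:ℝ) * (σ * (-Real.log σ)) ≤ (K:ℝ) * 1 :=
          mul_le_mul_of_nonneg_left hx hKnn
        nlinarith
    · -- 1 < σ ≤ R
      have hlog0 : 0 ≤ Real.log σ := Real.log_nonneg h1.le
      have hlogR : Real.log σ ≤ LR :=
        le_trans (Real.log_le_log hσ hσR) (by rw [hLRdef]; exact le_max_right _ _)
      have hub : p σ - 2 ≤ |p 0| + K*R + 2 := by
        have hab := abs_le.mp hKσ
        have h10 : p 0 ≤ |p 0| := le_abs_self _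
        have h11 : (K:ℝ) * σ ≤ K * R := mul_le_mul_of_nonneg_left hσR hKnn
        linarith
      have hs1 : (p σ - 2) * Real.log σ ≤ (|p 0| + K*R + 2) * Real.log σ :=
        mul_le_mul_of_nonneg_right hub hlog0
      have hs2 : (|p 0| + K*R + 2) * Real.log σ ≤ (|p 0| + K*R + 2) * LR :=
        mul_le_mul_of_nonneg_left hlogR habsKR
      linarith
  -- A in exponential form on positive reals
  have hApos : ∀ σ : ℝ, 0 < σ → A σ = Real.exp ((p σ - 1) * Real.log σ) := by
    intro σ hσ
    rw [hA σ hσ.ne', abs_of_pos hσ, Real.rpow_def_of_pos hσ]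
    have h1 : (p σ - 1) * Real.log σ = Real.log σ * (p σ - 2) + Real.log σ := by ring
    rw [h1, Real.exp_add, Real.exp_log hσ]
  have hAnn : ∀ σ : ℝ, 0 ≤ σ → 0 ≤ A σ := by
    intro σ hσ
    rcases eq_or_lt_of_le hσ with h | h
    · simp [← h, hA0]
    · rw [hApos σ h]; exact (Real.exp_pos _).le
  -- linear upper bound
  have hAle : ∀ σ : ℝ, 0 ≤ σ → σ ≤ R → A σ ≤ C₁ * σ := by
    intro σ hσ hσR
    rcases eq_or_lt_of_le hσ with h | h
    · simp [← h, hA0]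
    · rw [hApos σ h]
      have h1 : (p σ - 1) * Real.log σ = (p σ - 2) * Real.log σ + Real.log σ := by ring
      rw [h1, Real.exp_add, Real.exp_log h]
      have hh : Real.exp ((p σ - 2) * Real.log σ) ≤ C₁ := by
        rw [hC₁def]; exact Real.exp_le_exp.mpr (hBound σ h hσR)
      have : Real.exp ((p σ - 2) * Real.log σ) * σ ≤ C₁ * σ :=
        mul_le_mul_of_nonneg_right hh h.le
      linarith
  -- exponential mean value bound
  have hexp : ∀ x y : ℝ, |Real.exp x - Real.exp y| ≤ max (Real.exp x) (Real.exp y) * |x - y| := by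
    have key : ∀ x y : ℝ, y ≤ x → Real.exp x - Real.exp y ≤ Real.exp x * (x - y) := by
      intro x y hxy
      have h1 : (y - x) + 1 ≤ Real.exp (y - x) := Real.add_one_le_exp _
      have h2 : Real.exp (y - x) * Real.exp x = Real.exp y := by
        rw [← Real.exp_add]; ring_nf
      nlinarith [Real.exp_pos x]
    intro x y
    rcases le_total y x with h | h
    · have h1 := key x y h
      have h2 : 0 ≤ Real.exp x - Real.exp y := by
        have := Real.exp_le_exp.mpr h; linarith
      rw [abs_of_nonneg h2, abs_of_nonneg (by linarith : (0:ℝ) ≤ x - y)]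
      calc Real.exp x - Real.exp y ≤ Real.exp x * (x - y) := h1
        _ ≤ max (Real.exp x) (Real.exp y) * (x - y) :=
            mul_le_mul_of_nonneg_right (le_max_left _ _) (by linarith)
    · have h1 := key y x h
      have h2 : 0 ≤ Real.exp y - Real.exp x := by
        have := Real.exp_le_exp.mpr h; linarith
      rw [abs_sub_comm, abs_of_nonneg h2, abs_sub_comm x y,
        abs_of_nonneg (by linarith : (0:ℝ) ≤ y - x)]
      calc Real.exp y - Real.exp x ≤ Real.exp y * (y - x) := h1
        _ ≤ max (Real.exp x) (Real.exp y) * (y - x) :=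
            mul_le_mul_of_nonneg_right (le_max_right _ _) (by linarith)
  -- main estimate on [0, R]
  have hg : ∀ t s : ℝ, 0 ≤ t → t ≤ s → s ≤ R → |A s - A t| ≤ Lg * (s - t) := by
    intro t s ht hts hsR
    rcases le_or_gt s (2*t) with hcase | hcase
    · -- close case : t ≤ s ≤ 2t
      rcases eq_or_lt_of_le hts with heq | hlt
      · rw [← heq, sub_self, sub_self, abs_zero, mul_zero]
      have ht0 : 0 < t := by nlinarith
      have hs0 : 0 < s := lt_trans ht0 hlt
      have hAs := hApos s hs0
      have hAt := hApos t ht0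
      obtain ⟨b, hbdef⟩ : ∃ x : ℝ, x = (p s - 1) * Real.log s := ⟨_, rfl⟩
      obtain ⟨a, hadef⟩ : ∃ x : ℝ, x = (p t - 1) * Real.log t := ⟨_, rfl⟩
      rw [← hbdef] at hAs
      rw [← hadef] at hAt
      have hmax : max (Real.exp b) (Real.exp a) ≤ 2 * C₁ * t := by
        have h1 : A s ≤ C₁ * s := hAle s hs0.le hsR
        have h2 : A t ≤ C₁ * t := hAle t ht0.le (le_trans hts hsR)
        rw [max_le_iff]
        constructor
        · rw [← hAs]
          nlinarith [mul_le_mul_of_nonneg_left hcase hC₁pos.le]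
        · rw [← hAt]; nlinarith
      have hlogmono : Real.log t ≤ Real.log s := Real.log_le_log ht0 hts
      have hlogdiff : t * (Real.log s - Real.log t) ≤ s - t := by
        have h := Real.log_le_sub_one_of_pos (show (0:ℝ) < s/t by positivity)
        rw [Real.log_div hs0.ne' ht0.ne'] at h
        have hst : t * (s/t) = s := by field_simp
        nlinarith [mul_le_mul_of_nonneg_left h ht0.le]
      have hpsM : |p s - 1| ≤ M := by
        have h1 := abs_le.mp (hK s hs0.le)
        have h3 : -|p 0| ≤ p 0 := neg_abs_le _
        have h2 : p 0 ≤ |p 0| := le_abs_self _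
        have h4 : (K:ℝ) * s ≤ K * R := mul_le_mul_of_nonneg_left hsR hKnn
        rw [abs_le]; constructor <;> nlinarith [mul_nonneg hKnn hs0.le]
      have hppt : |p s - p t| ≤ K * (s - t) := by
        have := (lipschitzOnWith_iff_dist_le_mul.mp hpLip) s (Set.mem_Ici.mpr hs0.le) t
          (Set.mem_Ici.mpr ht0.le)
        rw [Real.dist_eq, Real.dist_eq, abs_of_nonneg (by linarith : (0:ℝ) ≤ s - t)] at this
        exact this
      have htlog : t * |Real.log t| ≤ C₂ := by
        rcases le_or_gt t 1 with h1 | h1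
        · have hx2 := hxlog t ht0 h1
          have h3 : Real.log t ≤ 0 := Real.log_nonpos ht0.le h1
          rw [abs_of_nonpos h3]
          have : (0:ℝ) ≤ R * LR := mul_nonneg hR.le hLR0
          linarith
        · have h3 : 0 ≤ Real.log t := Real.log_nonneg h1.le
          rw [abs_of_nonneg h3]
          have h4 : Real.log t ≤ LR :=
            le_trans (Real.log_le_log ht0 (le_trans hts hsR)) (by rw [hLRdef]; exact le_max_right _ _)
          nlinarith [mul_le_mul (le_trans hts hsR) h4 h3 hR.le]
      have hba : t * |b - a| ≤ M * (s - t) + ((K:ℝ) * (s - t)) * C₂ := by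
        have h1 : b - a = (p s - 1) * (Real.log s - Real.log t) + (p s - p t) * Real.log t := by
          rw [hbdef, hadef]; ring
        have h2 : |b - a| ≤ |p s - 1| * (Real.log s - Real.log t)
            + |p s - p t| * |Real.log t| := by
          rw [h1]
          calc |(p s - 1) * (Real.log s - Real.log t) + (p s - p t) * Real.log t|
              ≤ |(p s - 1) * (Real.log s - Real.log t)| + |(p s - p t) * Real.log t| :=
                abs_add_le _ _
            _ = |p s - 1| * |Real.log s - Real.log t| + |p s - p t| * |Real.log t| := by
                rw [abs_mul, abs_mul]
            _ = |p s - 1| * (Real.log s - Real.log t) + |p s - p t| * |Real.log t| := by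
                rw [abs_of_nonneg (by linarith : (0:ℝ) ≤ Real.log s - Real.log t)]
        have h7 : 0 ≤ t * (Real.log s - Real.log t) :=
          mul_nonneg ht0.le (by linarith)
        have h4 : t * (|p s - 1| * (Real.log s - Real.log t)) ≤ M * (s - t) := by
          have e : t * (|p s - 1| * (Real.log s - Real.log t))
              = |p s - 1| * (t * (Real.log s - Real.log t)) := by ring
          rw [e]
          calc |p s - 1| * (t * (Real.log s - Real.log t))
              ≤ M * (t * (Real.log s - Real.log t)) := mul_le_mul_of_nonneg_right hpsM h7
            _ ≤ M * (s - t) := mul_le_mul_of_nonneg_left hlogdiff (by linarith)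
        have h8 : t * (|p s - p t| * |Real.log t|) ≤ ((K:ℝ) * (s - t)) * C₂ := by
          have e2 : t * (|p s - p t| * |Real.log t|)
              = |p s - p t| * (t * |Real.log t|) := by ring
          rw [e2]
          calc |p s - p t| * (t * |Real.log t|)
              ≤ ((K:ℝ) * (s - t)) * (t * |Real.log t|) :=
                mul_le_mul_of_nonneg_right hppt (mul_nonneg ht0.le (abs_nonneg _))
            _ ≤ ((K:ℝ) * (s - t)) * C₂ :=
                mul_le_mul_of_nonneg_left htlog
                  (mul_nonneg hKnn (by linarith))
        have h3 : t * |b - a| ≤ t * (|p s - 1| * (Real.log s - Real.log t))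
            + t * (|p s - p t| * |Real.log t|) := by
          nlinarith [mul_le_mul_of_nonneg_left h2 ht0.le]
        linarith
      have hfin : |A s - A t| ≤ 2 * C₁ * (M * (s - t) + ((K:ℝ) * (s - t)) * C₂) := by
        rw [hAs, hAt]
        calc |Real.exp b - Real.exp a|
            ≤ max (Real.exp b) (Real.exp a) * |b - a| := hexp b a
          _ ≤ (2 * C₁ * t) * |b - a| :=
              mul_le_mul_of_nonneg_right hmax (abs_nonneg _)
          _ = (2 * C₁) * (t * |b - a|) := by ring
          _ ≤ (2 * C₁) * (M * (s - t) + ((K:ℝ) * (s - t)) * C₂) :=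
              mul_le_mul_of_nonneg_left hba (by linarith)
          _ = 2 * C₁ * (M * (s - t) + ((K:ℝ) * (s - t)) * C₂) := by ring
      have hlast : 2 * C₁ * (M * (s - t) + ((K:ℝ) * (s - t)) * C₂) ≤ Lg * (s - t) := by
        rw [hLgdef]
        nlinarith [mul_nonneg (mul_nonneg (by norm_num : (0:ℝ) ≤ 2) hC₁pos.le)
          (by linarith : (0:ℝ) ≤ s - t)]
      linarith
    · -- far case : s > 2t
      have hs0 : 0 < s := by linarith
      have h1 : A s ≤ C₁ * s := hAle s hs0.le hsR
      have h2 : A t ≤ C₁ * t := hAle t ht (le_trans hts hsR)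
      have h3 : 0 ≤ A s := hAnn s hs0.le
      have h4 : 0 ≤ A t := hAnn t ht
      have h5 : |A s - A t| ≤ C₁ * s := by
        rw [abs_le]
        constructor <;> nlinarith [mul_le_mul_of_nonneg_left hts hC₁pos.le]
      have h6 : C₁ * s ≤ 2 * C₁ * (s - t) := by
        nlinarith [mul_nonneg hC₁pos.le (by linarith : (0:ℝ) ≤ s - 2*t)]
      nlinarith [mul_nonneg (by linarith : (0:ℝ) ≤ Lg - 2*C₁)
        (by linarith : (0:ℝ) ≤ s - t)]
  -- oddness
  have hodd : ∀ s : ℝ, A (-s) = -A s := by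
    intro s
    rcases eq_or_ne s 0 with h | h
    · simp [h, hA0]
    · rw [hA (-s) (neg_ne_zero.mpr h), hA s h, abs_neg]; ring
  -- assemble
  refine ⟨Real.toNNReal Lg, LipschitzOnWith.of_dist_le_mul ?_⟩
  have hcoe : ((Real.toNNReal Lg : NNReal) : ℝ) = Lg := Real.coe_toNNReal _ hLg0
  have core : ∀ x y : ℝ, x ∈ Set.Icc (-R) R → y ∈ Set.Icc (-R) R → y ≤ x →
      |A x - A y| ≤ Lg * (x - y) := by
    intro x y hx hy hyx
    obtain ⟨hx1, hx2⟩ := hx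
    obtain ⟨hy1, hy2⟩ := hy
    rcases le_or_gt 0 y with h0y | h0y
    · exact hg y x h0y hyx hx2
    rcases le_or_gt x 0 with hx0 | hx0
    · have hh := hg (-x) (-y) (by linarith) (by linarith) (by linarith)
      rw [hodd, hodd] at hh
      have he : |A x - A y| = |-A y - -A x| := by
        congr 1; ring
      rw [he]
      calc |-A y - -A x| ≤ Lg * (-y - -x) := hh
        _ = Lg * (x - y) := by ring
    · -- y < 0 < x
      have hAx : A x ≤ C₁ * x := hAle x hx0.le hx2
      have hAy : A (-y) ≤ C₁ * (-y) := hAle (-y) (by linarith) (by linarith)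
      have h3 : 0 ≤ A x := hAnn x hx0.le
      have h4 : 0 ≤ A (-y) := hAnn (-y) (by linarith)
      have h5 := hodd (-y)
      rw [neg_neg] at h5
      have h6 : |A x - A y| ≤ C₁ * (x - y) := by
        rw [h5, abs_le]
        constructor <;> nlinarith [mul_nonneg hC₁pos.le (by linarith : (0:ℝ) ≤ x - y)]
      have h7 : C₁ * (x - y) ≤ Lg * (x - y) := by
        nlinarith [mul_nonneg (by linarith : (0:ℝ) ≤ Lg - C₁)
          (by linarith : (0:ℝ) ≤ x - y)]
      linarith
  intro x hx y hy
  rw [Real.dist_eq, Real.dist_eq, hcoe]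
  rcases le_total y x with h | h
  · have := core x y hx hy h
    rw [abs_of_nonneg (by linarith : (0:ℝ) ≤ x - y)]
    linarith
  · have := core y x hy hx h
    rw [abs_sub_comm, abs_sub_comm x y, abs_of_nonneg (by linarith : (0:ℝ) ≤ y - x)]
    linarith
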